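/- arXiv:1301.0214 — 3 statements merged into one kernel-verified Lean document; each statement's English description precedes it below -/
import Mathlib

section
/- Let τ : ℕ → ℂ be a multiplicative function satisfying the Hecke relation τ(p^{k+i}) = τ(p^k)τ(p^i) − τ(p^{k-1})τ(p^{i-1}) for all primes p and integers k, i ≥ 1. Fix a prime p and an integer ν ≥ 1, and for s with real part large define G_i(s) = Σ_{k≥0} τ(p^k)τ(p^{k+i}) p^{-ks}. Then as formal identities of convergent series, G_ν(s) = (τ(p^ν) − τ(p)τ(p^{ν-1})/(p^s+1)) · G_0(s). -/
/-!
Peeling off the `k = 0` term of `G_i` and applying the Hecke relation to every other term gives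
`G_i = τ(p^i) G_0 - τ(p^{i-1}) p^{-s} G_1` for `i ≥ 1`. At `i = 1` this is the linear equation
`(1 + p^{-s}) G_1 = τ(p) G_0`; substituting its solution back gives the claim.
-/

section HeckeRecursion

variable {R : Type*} [CommRing R] [TopologicalSpace R] [IsTopologicalRing R] [T2Space R]

/-- With `a k = τ (p ^ k)` and `x = p ^ (-s)` this is the series `G_i(s)`. -/
noncomputable def heckeLocalSeries (a : ℕ → R) (x : R) (i : ℕ) : R :=
  ∑' k, a k * a (k + i) * x ^ k

theorem heckeLocalSeries_eq_sub {a : ℕ → R} {x : R} {i : ℕ} (ha0 : a 0 = 1)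
    (hrec : ∀ k, 1 ≤ k → a (k + i) = a k * a i - a (k - 1) * a (i - 1))
    (hsum0 : Summable fun k => a k * a (k + 0) * x ^ k)
    (hsum1 : Summable fun k => a k * a (k + 1) * x ^ k)
    (hsumi : Summable fun k => a k * a (k + i) * x ^ k) :
    heckeLocalSeries a x i
      = a i * heckeLocalSeries a x 0 - a (i - 1) * x * heckeLocalSeries a x 1 := by
  have hterm : ∀ k, a (k + 1) * a (k + 1 + i) * x ^ (k + 1)
      = a i * (a (k + 1) * a (k + 1 + 0) * x ^ (k + 1))
        - a (i - 1) * x * (a k * a (k + 1) * x ^ k) := fun k => by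
    rw [hrec (k + 1) k.succ_pos, Nat.add_sub_cancel, add_zero]
    ring
  have hshift0 := (summable_nat_add_iff 1).2 hsum0
  rw [heckeLocalSeries, hsumi.tsum_eq_zero_add, tsum_congr hterm,
    (hshift0.mul_left _).tsum_sub (hsum1.mul_left _), hshift0.tsum_mul_left,
    hsum1.tsum_mul_left, heckeLocalSeries, hsum0.tsum_eq_zero_add]
  simp only [ha0, zero_add, heckeLocalSeries]
  ring

theorem one_add_mul_heckeLocalSeries_one {a : ℕ → R} {x : R} (ha0 : a 0 = 1)
    (hrec : ∀ k, 1 ≤ k → a (k + 1) = a k * a 1 - a (k - 1) * a 0)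
    (hsum0 : Summable fun k => a k * a (k + 0) * x ^ k)
    (hsum1 : Summable fun k => a k * a (k + 1) * x ^ k) :
    (1 + x) * heckeLocalSeries a x 1 = a 1 * heckeLocalSeries a x 0 := by
  have h := heckeLocalSeries_eq_sub ha0 hrec hsum0 hsum1 hsum1
  rw [Nat.sub_self, ha0] at h
  linear_combination h

end HeckeRecursion

theorem heckeLocalSeries_eq_mul {K : Type*} [Field K] [TopologicalSpace K] [IsTopologicalRing K]
    [T2Space K] {a : ℕ → K} {x : K} {ν : ℕ} (ha0 : a 0 = 1)
    (hrec : ∀ k i, 1 ≤ k → 1 ≤ i → a (k + i) = a k * a i - a (k - 1) * a (i - 1))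
    (hν : 1 ≤ ν) (hsum : ∀ i, Summable fun k => a k * a (k + i) * x ^ k) (hx : 1 + x ≠ 0) :
    heckeLocalSeries a x ν
      = (a ν - a 1 * a (ν - 1) * x / (1 + x)) * heckeLocalSeries a x 0 := by
  have hG1 := one_add_mul_heckeLocalSeries_one ha0 (fun k hk => hrec k 1 hk le_rfl)
    (hsum 0) (hsum 1)
  rw [heckeLocalSeries_eq_sub ha0 (fun k hk => hrec k ν hk hν) (hsum 0) (hsum 1) (hsum ν)]
  field_simp
  linear_combination -(a (ν - 1) * x) * hG1

theorem apply_one_eq_one_or_eq_zero {M : Type*} [MonoidWithZero M] [IsLeftCancelMulZero M]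
    {f : ℕ → M} (hmul : ∀ m n, Nat.Coprime m n → f (m * n) = f m * f n) : f 1 = 1 ∨ f = 0 := by
  obtain h | h := IsIdempotentElem.iff_eq_zero_or_one.1 (hmul 1 1 (Nat.coprime_one_left 1)).symm
  · right
    funext n
    simpa [h] using hmul n 1 (Nat.coprime_one_right n)
  · exact Or.inl h

open scoped Complex

/-- Hecke recursion for the local factors: `G_ν(s) = (τ(p^ν) − τ(p)τ(p^{ν-1})/(p^s+1)) G_0(s)`. -/
theorem hecke_local_series (τ : ℕ → ℂ)
    (hmul : ∀ m n : ℕ, Nat.Coprime m n → τ (m * n) = τ m * τ n)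
    (hHecke : ∀ q : ℕ, q.Prime → ∀ k i : ℕ, 1 ≤ k → 1 ≤ i →
      τ (q ^ (k + i)) = τ (q ^ k) * τ (q ^ i) - τ (q ^ (k - 1)) * τ (q ^ (i - 1)))
    (p : ℕ) (hp : p.Prime) (ν : ℕ) (hν : 1 ≤ ν) (s : ℂ)
    (hsum : ∀ i : ℕ, Summable (fun k : ℕ => τ (p ^ k) * τ (p ^ (k + i)) * ((p : ℂ) ^ (-s)) ^ k))
    (hden : (p : ℂ) ^ s + 1 ≠ 0) :
    ∑' k : ℕ, τ (p ^ k) * τ (p ^ (k + ν)) * ((p : ℂ) ^ (-s)) ^ k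
      = (τ (p ^ ν) - τ p * τ (p ^ (ν - 1)) / ((p : ℂ) ^ s + 1)) *
        ∑' k : ℕ, τ (p ^ k) * τ (p ^ k) * ((p : ℂ) ^ (-s)) ^ k := by
  rcases (apply_one_eq_one_or_eq_zero hmul).symm with rfl | hτ1
  · simp
  have hps : (p : ℂ) ^ s ≠ 0 := by
    simp [Complex.cpow_eq_zero_iff, hp.ne_zero]
  have hx : 1 + (p : ℂ) ^ (-s) ≠ 0 := by
    rwa [Complex.cpow_neg, ← mul_ne_zero_iff_left hps, mul_add, mul_one, mul_inv_cancel₀ hps]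
  have h := heckeLocalSeries_eq_mul (a := fun k => τ (p ^ k)) (by simpa using hτ1)
    (hHecke p hp) hν hsum hx
  simp only [heckeLocalSeries, add_zero, pow_one] at h
  rw [h, Complex.cpow_neg]
  field_simp
end

section
/- Let τ : ℕ → ℂ be multiplicative satisfying the Hecke relation, and let a ≥ 1 be an integer. Write F(s) = Σ_{n≥1} τ(n)² n^{-s} and F_a(s) = Σ_{n≥1} τ(n)τ(an) n^{-s}, convergent absolutely for Re(s) sufficiently large. Then F_a(s) = F(s) · Π_{p^ν ∥ a} (τ(p^ν) − τ(p)τ(p^{ν-1})/(p^s + 1)), where the product runs over primes p with p^ν exactly dividing a. -/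
open scoped Complex

/-!
Fix a prime `p` not dividing `c` and write `x = p^{-s}`. Writing `n = p^k m` with `p ∤ m` and
using multiplicativity, a series over `n` coprime to `c` of `τ(n) τ(p^ν b n) n^{-s}` (with `p ∤ b`)
factors as the local series `L_ν = ∑_k τ(p^k) τ(p^{k+ν}) x^k` times the same kind of series over
`m` coprime to `pc`, with `p^ν b` replaced by `b`. For `ν ≥ 1` the Hecke relation gives
`L_ν = τ(p^ν) L_0 - τ(p^{ν-1}) x L_1`; at `ν = 1` this reads `(1 + x) L_1 = τ(p) L_0`, so
`L_ν = (τ(p^ν) - τ(p) τ(p^{ν-1}) / (p^s + 1)) L_0`. Removing the primes of `a` one at a time,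
the factors `L_0` recombine with the remaining series into `F(s)`.
-/

namespace PNat

noncomputable def primePowMulEquiv {p : ℕ} (hp : p.Prime) :
    ℕ × {m : ℕ+ // ¬ p ∣ (m : ℕ)} ≃ ℕ+ where
  toFun x := ⟨p ^ x.1 * x.2.1, Nat.mul_pos (pow_pos hp.pos _) x.2.1.pos⟩
  invFun n := ((n : ℕ).factorization p,
    ⟨⟨ordCompl[p] n, Nat.ordCompl_pos p n.ne_zero⟩, Nat.not_dvd_ordCompl hp n.ne_zero⟩)
  left_inv := by
    rintro ⟨k, m, hm⟩
    have hk : (p ^ k * (m : ℕ)).factorization p = k := by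
      simp [Nat.factorization_mul (pow_ne_zero _ hp.ne_zero) m.ne_zero, hp.factorization_pow,
        Nat.factorization_eq_zero_of_not_dvd hm]
    refine Prod.ext hk (Subtype.ext (PNat.coe_injective ?_))
    simp only [PNat.mk_coe, hk, Nat.mul_div_cancel_left _ (pow_pos hp.pos k)]
  right_inv n := PNat.coe_injective (Nat.ordProj_mul_ordCompl_eq_self n p)

end PNat

theorem tsum_pnat_eq_tsum_mul_tsum_of_prime {K : Type*} [NormedField K] [CompleteSpace K]
    {p : ℕ} (hp : p.Prime) {f u v : ℕ → K} (hf : Summable fun n : ℕ+ => f n)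
    (hv : ∀ m, p ∣ m → v m = 0) (hfuv : ∀ k m, ¬ p ∣ m → f (p ^ k * m) = u k * v m) :
    ∑' n : ℕ+, f n = (∑' k, u k) * ∑' m : ℕ+, v m := by
  set e := PNat.primePowMulEquiv hp
  have hfe : ∀ x, f (e x) = u x.1 * v x.2.1 := fun ⟨k, m, hm⟩ => hfuv k m hm
  have hv' : ∑' m : {m : ℕ+ // ¬ p ∣ (m : ℕ)}, v m = ∑' m : ℕ+, v m :=
    tsum_subtype_eq_of_support_subset (s := {m : ℕ+ | ¬ p ∣ (m : ℕ)})
      fun m hm hpm => hm (hv m hpm)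
  calc ∑' n : ℕ+, f n = ∑' x, f (e x) := (e.tsum_eq _).symm
    _ = ∑' x, u x.1 * v x.2.1 := tsum_congr hfe
    _ = ∑' k, ∑' m : {m : ℕ+ // ¬ p ∣ (m : ℕ)}, u k * v m :=
      ((e.summable_iff.mpr hf).congr hfe).tsum_prod
    _ = (∑' k, u k) * ∑' m : ℕ+, v m := by simp_rw [tsum_mul_left, tsum_mul_right, hv']

theorem Nat.prod_primeFactors_prime_pow_mul {M : Type*} [CommMonoid M] (g : ℕ → ℕ → M)
    {p a ν : ℕ} (hp : p.Prime) (hpa : ¬ p ∣ a) (hν : ν ≠ 0) :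
    ∏ q ∈ (p ^ ν * a).primeFactors, g q ((p ^ ν * a).factorization q)
      = g p ν * ∏ q ∈ a.primeFactors, g q (a.factorization q) := by
  have hcop : (p ^ ν).Coprime a := ((hp.coprime_iff_not_dvd).2 hpa).pow_left ν
  rw [← Nat.prod_factorization_eq_prod_primeFactors, ← Nat.prod_factorization_eq_prod_primeFactors,
    Nat.factorization_mul_of_coprime hcop, Finsupp.prod_add_index_of_disjoint
      (by simpa only [Nat.support_factorization] using hcop.disjoint_primeFactors),
    Nat.prod_factorization_eq_prod_primeFactors, Nat.primeFactors_prime_pow hν hp,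
    Finset.prod_singleton, hp.factorization_pow, Finsupp.single_eq_same]

section HeckeRecursion

variable {K : Type*} [Field K] [TopologicalSpace K] [IsTopologicalRing K] {t : ℕ → K} {x A C : K}

theorem hasSum_hecke_shift (ht0 : t 0 = 1)
    (ht : ∀ k i, 1 ≤ k → 1 ≤ i → t (k + i) = t k * t i - t (k - 1) * t (i - 1))
    (hA : HasSum (fun k => t k * t k * x ^ k) A) (hC : HasSum (fun k => t k * t (k + 1) * x ^ k) C)
    {ν : ℕ} (hν : 1 ≤ ν) :
    HasSum (fun k => t k * t (k + ν) * x ^ k) (t ν * A - t (ν - 1) * x * C) := by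
  have hA' : HasSum (fun k => t (k + 1) * t (k + 1) * x ^ (k + 1)) (A - 1) := by
    simpa [ht0] using (hasSum_nat_add_iff' 1).2 hA
  rw [← hasSum_nat_add_iff' 1]
  convert (hA'.mul_left (t ν)).sub (hC.mul_left (t (ν - 1) * x)) using 1
  · ext k
    rw [ht (k + 1) ν (by omega) hν, Nat.add_sub_cancel]
    ring
  · simp only [Finset.range_one, Finset.sum_singleton, ht0, zero_add, one_mul, pow_zero, mul_one]
    ring

theorem hasSum_hecke_shift_eq_mul [T2Space K] (ht0 : t 0 = 1)
    (ht : ∀ k i, 1 ≤ k → 1 ≤ i → t (k + i) = t k * t i - t (k - 1) * t (i - 1))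
    (hx : 1 + x ≠ 0) (hA : HasSum (fun k => t k * t k * x ^ k) A)
    (hC : Summable fun k => t k * t (k + 1) * x ^ k) {ν : ℕ} (hν : 1 ≤ ν) :
    HasSum (fun k => t k * t (k + ν) * x ^ k) ((t ν - t 1 * t (ν - 1) * x / (1 + x)) * A) := by
  obtain ⟨C, hC⟩ := hC
  -- the case `ν = 1` of `hasSum_hecke_shift` determines `C`
  have hC1 : (1 + x) * C = t 1 * A := by
    have := (hasSum_hecke_shift ht0 ht hA hC le_rfl).unique hC
    rw [Nat.sub_self, ht0] at this
    linear_combination -this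
  convert hasSum_hecke_shift ht0 ht hA hC hν using 1
  field_simp
  linear_combination t (ν - 1) * x * hC1

end HeckeRecursion

theorem summable_mul_mul_of_summable_sq_mul {ι : Type*} {f g w : ι → ℝ} (hf0 : 0 ≤ f)
    (hg0 : 0 ≤ g) (hw : 0 ≤ w) (hf : Summable fun i => f i ^ 2 * w i)
    (hg : Summable fun i => g i ^ 2 * w i) : Summable fun i => f i * g i * w i :=
  ((hf.add hg).div_const 2).of_nonneg_of_le
    (fun i => mul_nonneg (mul_nonneg (hf0 i) (hg0 i)) (hw i))
    fun i => by nlinarith [mul_nonneg (sq_nonneg (f i - g i)) (hw i)]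

theorem Complex.natCast_pow_cpow (p k : ℕ) (s : ℂ) :
    ((p ^ k : ℕ) : ℂ) ^ s = ((p : ℂ) ^ s) ^ k := by
  rw [Nat.cast_pow, ← Complex.natCast_cpow_natCast_mul, Complex.cpow_nat_mul]

namespace HeckeShifted

variable (τ : ℕ → ℂ) (s : ℂ)

noncomputable def coprimeShiftedTerm (c b n : ℕ) : ℂ :=
  if n.Coprime c then τ n * τ (b * n) * (n : ℂ) ^ (-s) else 0

/-- `F_b(s)` with the sum restricted to `n` coprime to `c`. -/
noncomputable def coprimeShiftedSeries (c b : ℕ) : ℂ :=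
  ∑' n : ℕ+, coprimeShiftedTerm τ s c b n

noncomputable def primePowShiftedSeries (p ν : ℕ) : ℂ :=
  ∑' k, τ (p ^ k) * τ (p ^ (k + ν)) * ((p : ℂ) ^ (-s)) ^ k

noncomputable def heckeFactor (q ν : ℕ) : ℂ :=
  τ (q ^ ν) - τ q * τ (q ^ (ν - 1)) / ((q : ℂ) ^ s + 1)

variable {τ s}

theorem summable_shifted (hF : Summable fun n : ℕ+ => ‖τ n‖ ^ 2 * ‖((n : ℕ) : ℂ) ^ (-s)‖)
    {b : ℕ} (hb : b ≠ 0) : Summable fun n : ℕ+ => τ n * τ (b * n) * ((n : ℕ) : ℂ) ^ (-s) := by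
  have hbn : Summable fun n : ℕ+ => ‖τ (b * n)‖ ^ 2 * ‖((n : ℕ) : ℂ) ^ (-s)‖ := by
    have hb' : ‖(b : ℂ) ^ (-s)‖ ≠ 0 := by simp [Complex.cpow_eq_zero_iff, hb]
    refine ((hF.comp_injective (mul_right_injective (b.toPNat (Nat.pos_of_ne_zero hb)))).div_const
      ‖(b : ℂ) ^ (-s)‖).congr fun n => ?_
    show ‖τ (b * n)‖ ^ 2 * ‖((b * n : ℕ) : ℂ) ^ (-s)‖ / ‖(b : ℂ) ^ (-s)‖ = _
    rw [Nat.cast_mul, Complex.natCast_mul_natCast_cpow, norm_mul]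
    field_simp
  refine Summable.of_norm ((summable_mul_mul_of_summable_sq_mul (fun _ => norm_nonneg _)
    (fun _ => norm_nonneg _) (fun _ => norm_nonneg _) hF hbn).congr fun n => ?_)
  simp only [norm_mul]

theorem summable_prime_pow_shifted
    (hF : Summable fun n : ℕ+ => ‖τ n‖ ^ 2 * ‖((n : ℕ) : ℂ) ^ (-s)‖) {p : ℕ} (hp : p.Prime)
    (μ : ℕ) : Summable fun k => τ (p ^ k) * τ (p ^ (k + μ)) * ((p : ℂ) ^ (-s)) ^ k := by
  have hinj : Function.Injective fun k : ℕ => (⟨p ^ k, pow_pos hp.pos k⟩ : ℕ+) :=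
    fun k l hkl => Nat.pow_right_injective hp.two_le (congrArg PNat.val hkl)
  refine ((summable_shifted hF (pow_ne_zero μ hp.ne_zero)).comp_injective hinj).congr fun k => ?_
  show τ (p ^ k) * τ (p ^ μ * p ^ k) * ((p ^ k : ℕ) : ℂ) ^ (-s) = _
  rw [← pow_add, add_comm μ, Complex.natCast_pow_cpow]

theorem coprimeShiftedSeries_prime_pow_mul
    (hmul : ∀ m n : ℕ, Nat.Coprime m n → τ (m * n) = τ m * τ n)
    (hF : Summable fun n : ℕ+ => ‖τ n‖ ^ 2 * ‖((n : ℕ) : ℂ) ^ (-s)‖) {p b c : ℕ} (hp : p.Prime)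
    (hpb : ¬ p ∣ b) (hpc : ¬ p ∣ c) (hb : b ≠ 0) (ν : ℕ) :
    coprimeShiftedSeries τ s c (p ^ ν * b)
      = primePowShiftedSeries τ s p ν * coprimeShiftedSeries τ s (p * c) b := by
  refine tsum_pnat_eq_tsum_mul_tsum_of_prime hp ?_ ?_ fun k m hpm => ?_
  · refine Summable.of_norm_bounded
      (summable_shifted hF (mul_ne_zero (pow_ne_zero ν hp.ne_zero) hb)).norm fun n => ?_
    unfold coprimeShiftedTerm
    split_ifs
    · exact le_rfl
    · exact norm_zero.trans_le (norm_nonneg _)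
  · intro m hpm
    rw [coprimeShiftedTerm, if_neg fun hm =>
      hp.coprime_iff_not_dvd.1 (Nat.coprime_mul_iff_right.1 hm).1.symm hpm]
  have hpm' : p.Coprime m := hp.coprime_iff_not_dvd.2 hpm
  have hcond₁ : (p ^ k * m).Coprime c ↔ m.Coprime c :=
    Nat.coprime_mul_iff_left.trans (and_iff_right ((hp.coprime_iff_not_dvd.2 hpc).pow_left k))
  have hcond₂ : m.Coprime (p * c) ↔ m.Coprime c :=
    Nat.coprime_mul_iff_right.trans (and_iff_right hpm'.symm)
  simp only [coprimeShiftedTerm, hcond₁, hcond₂]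
  split_ifs
  · rw [hmul _ _ (hpm'.pow_left k), show p ^ ν * b * (p ^ k * m) = p ^ (k + ν) * (b * m) by ring,
      hmul _ _ (((hp.coprime_iff_not_dvd.2 hpb).mul_right hpm').pow_left _), Nat.cast_mul,
      Complex.natCast_mul_natCast_cpow, Complex.natCast_pow_cpow]
    ring
  · rw [mul_zero]

theorem primePowShiftedSeries_eq_heckeFactor_mul (h1 : τ 1 = 1)
    (hF : Summable fun n : ℕ+ => ‖τ n‖ ^ 2 * ‖((n : ℕ) : ℂ) ^ (-s)‖) {p : ℕ} (hp : p.Prime)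
    (hHecke : ∀ k i : ℕ, 1 ≤ k → 1 ≤ i →
      τ (p ^ (k + i)) = τ (p ^ k) * τ (p ^ i) - τ (p ^ (k - 1)) * τ (p ^ (i - 1)))
    (hden : (p : ℂ) ^ s + 1 ≠ 0) {ν : ℕ} (hν : 1 ≤ ν) :
    primePowShiftedSeries τ s p ν = heckeFactor τ s p ν * primePowShiftedSeries τ s p 0 := by
  have hps : (p : ℂ) ^ s ≠ 0 := by simp [Complex.cpow_eq_zero_iff, hp.ne_zero]
  have hx : (p : ℂ) ^ (-s) / (1 + (p : ℂ) ^ (-s)) = 1 / ((p : ℂ) ^ s + 1) := by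
    rw [Complex.cpow_neg]
    field_simp
  have hx1 : 1 + (p : ℂ) ^ (-s) ≠ 0 := by
    rw [Complex.cpow_neg]
    field_simp
    exact div_ne_zero hden hps
  have hL := hasSum_hecke_shift_eq_mul (t := fun k => τ (p ^ k)) (by simpa using h1) hHecke hx1
    (summable_prime_pow_shifted hF hp 0).hasSum (summable_prime_pow_shifted hF hp 1) hν
  rw [primePowShiftedSeries, primePowShiftedSeries, hL.tsum_eq, heckeFactor, pow_one,
    mul_div_assoc, hx]
  ring

theorem coprimeShiftedSeries_eq_mul_prod (h1 : τ 1 = 1)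
    (hmul : ∀ m n : ℕ, Nat.Coprime m n → τ (m * n) = τ m * τ n)
    (hHecke : ∀ q : ℕ, q.Prime → ∀ k i : ℕ, 1 ≤ k → 1 ≤ i →
      τ (q ^ (k + i)) = τ (q ^ k) * τ (q ^ i) - τ (q ^ (k - 1)) * τ (q ^ (i - 1)))
    (hden : ∀ q : ℕ, q.Prime → (q : ℂ) ^ s + 1 ≠ 0)
    (hF : Summable fun n : ℕ+ => ‖τ n‖ ^ 2 * ‖((n : ℕ) : ℂ) ^ (-s)‖) {b : ℕ} (hb : b ≠ 0)
    {c : ℕ} (hbc : b.Coprime c) :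
    coprimeShiftedSeries τ s c b = coprimeShiftedSeries τ s c 1 *
      ∏ q ∈ b.primeFactors, heckeFactor τ s q (b.factorization q) := by
  induction b using Nat.recOnPrimePow generalizing c with
  | zero => exact absurd rfl hb
  | one => simp
  | prime_pow_mul b p ν hp hpb hν ih =>
    have hb' : b ≠ 0 := right_ne_zero_of_mul hb
    have hpc : ¬ p ∣ c := hp.coprime_iff_not_dvd.1
      (hbc.coprime_dvd_left (dvd_mul_of_dvd_left (dvd_pow_self p hν.ne') b))
    have hbpc : b.Coprime (p * c) :=
      (hp.coprime_iff_not_dvd.2 hpb).symm.mul_right (hbc.coprime_dvd_left (dvd_mul_left b _))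
    have hsplit_one :=
      coprimeShiftedSeries_prime_pow_mul hmul hF hp hp.not_dvd_one hpc one_ne_zero 0
    rw [pow_zero, one_mul] at hsplit_one
    rw [coprimeShiftedSeries_prime_pow_mul hmul hF hp hpb hpc hb' ν, ih hb' hbpc,
      primePowShiftedSeries_eq_heckeFactor_mul h1 hF hp (hHecke p hp) (hden p hp) hν, hsplit_one,
      Nat.prod_primeFactors_prime_pow_mul _ hp hpb hν.ne']
    ring

end HeckeShifted

theorem eq_zero_or_map_one_of_map_mul_of_coprime {τ : ℕ → ℂ}
    (hmul : ∀ m n : ℕ, Nat.Coprime m n → τ (m * n) = τ m * τ n) : τ = 0 ∨ τ 1 = 1 := by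
  by_cases h0 : τ 1 = 0
  · exact .inl (funext fun n => by simpa [h0] using hmul n 1 (Nat.coprime_one_right n))
  · have h11 := hmul 1 1 (Nat.coprime_one_left 1)
    rw [mul_one] at h11
    exact .inr ((mul_eq_left₀ h0).1 h11.symm)

theorem hecke_shifted_dirichlet_series_general (τ : ℕ → ℂ)
    (hmul : ∀ m n : ℕ, Nat.Coprime m n → τ (m * n) = τ m * τ n)
    (hHecke : ∀ q : ℕ, q.Prime → ∀ k i : ℕ, 1 ≤ k → 1 ≤ i →
      τ (q ^ (k + i)) = τ (q ^ k) * τ (q ^ i) - τ (q ^ (k - 1)) * τ (q ^ (i - 1)))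
    (a : ℕ) (ha : 1 ≤ a) (s : ℂ)
    (hsumF : Summable (fun n : ℕ+ => τ n ^ 2 * ((n : ℕ) : ℂ) ^ (-s)))
    (hden : ∀ q : ℕ, q.Prime → (q : ℂ) ^ s + 1 ≠ 0) :
    ∑' n : ℕ+, τ n * τ (a * n) * ((n : ℕ) : ℂ) ^ (-s)
      = (∑' n : ℕ+, τ n ^ 2 * ((n : ℕ) : ℂ) ^ (-s)) *
        ∏ q ∈ a.primeFactors,
          (τ (q ^ (a.factorization q)) -
            τ q * τ (q ^ (a.factorization q - 1)) / ((q : ℂ) ^ s + 1)) := by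
  obtain rfl | h1 := eq_zero_or_map_one_of_map_mul_of_coprime hmul
  · simp
  have hF : Summable fun n : ℕ+ => ‖τ n‖ ^ 2 * ‖((n : ℕ) : ℂ) ^ (-s)‖ := by
    simpa only [norm_mul, norm_pow] using hsumF.norm
  have hseries := HeckeShifted.coprimeShiftedSeries_eq_mul_prod h1 hmul hHecke hden hF
    (Nat.one_le_iff_ne_zero.1 ha) (Nat.coprime_one_right a)
  simpa [HeckeShifted.coprimeShiftedSeries, HeckeShifted.coprimeShiftedTerm,
    HeckeShifted.heckeFactor, sq] using hseries

/-- For a multiplicative function satisfying the Hecke relation,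
`F_a(s) = F(s) ∏_{p^ν ∥ a} (τ(p^ν) − τ(p)τ(p^{ν-1})/(p^s+1))`. -/
theorem hecke_shifted_dirichlet_series (τ : ℕ → ℂ)
    (hmul : ∀ m n : ℕ, Nat.Coprime m n → τ (m * n) = τ m * τ n)
    (hHecke : ∀ q : ℕ, q.Prime → ∀ k i : ℕ, 1 ≤ k → 1 ≤ i →
      τ (q ^ (k + i)) = τ (q ^ k) * τ (q ^ i) - τ (q ^ (k - 1)) * τ (q ^ (i - 1)))
    (a : ℕ) (ha : 1 ≤ a) (s : ℂ)
    (hsumF : Summable (fun n : ℕ+ => τ n ^ 2 * ((n : ℕ) : ℂ) ^ (-s)))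
    (hsumFa : Summable (fun n : ℕ+ => τ n * τ (a * n) * ((n : ℕ) : ℂ) ^ (-s)))
    (hden : ∀ q : ℕ, q.Prime → (q : ℂ) ^ s + 1 ≠ 0) :
    ∑' n : ℕ+, τ n * τ (a * n) * ((n : ℕ) : ℂ) ^ (-s)
      = (∑' n : ℕ+, τ n ^ 2 * ((n : ℕ) : ℂ) ^ (-s)) *
        ∏ q ∈ a.primeFactors,
          (τ (q ^ (a.factorization q)) -
            τ q * τ (q ^ (a.factorization q - 1)) / ((q : ℂ) ^ s + 1)) :=
  hecke_shifted_dirichlet_series_general τ hmul hHecke a ha s hsumF hden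
end

section
/- Define for integers κ, λ ≥ 0 and a real number G the quantity L_{κ,λ} = Σ_ν ν! C(κ,ν) C(λ,ν) m_{κ−ν} m_{λ−ν} G^ν, where the sum runs over 0 ≤ ν ≤ min(κ,λ) with ν ≡ κ ≡ λ (mod 2), and m_j denotes the j-th standard Gaussian moment (m_j = 0 for odd j, m_j = j!/(2^{j/2}(j/2)!) for even j), with L_{κ,λ} = 0 if κ + λ is odd. Then the double exponential generating function satisfies Σ_{κ,λ ≥ 0} L_{κ,λ} U^κ V^λ / (κ! λ!) = exp(U²/2 + G·U·V + V²/2) as an identity of formal power series in U, V. -/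
/-- The `j`-th moment of the standard Gaussian: `0` for odd `j`,
`j!/(2^(j/2) (j/2)!)` for even `j`. -/
noncomputable def gaussMoment (j : ℕ) : ℝ :=
  if Even j then (Nat.factorial j : ℝ) / (2 ^ (j / 2) * Nat.factorial (j / 2)) else 0

/-- `L_{κ,λ} = Σ_ν ν! C(κ,ν) C(λ,ν) m_{κ−ν} m_{λ−ν} G^ν` over `0 ≤ ν ≤ min(κ,λ)`
with `ν ≡ κ ≡ λ (mod 2)`; it is `0` when `κ + λ` is odd (empty sum). -/
noncomputable def Lmix (G : ℝ) (κ lam : ℕ) : ℝ :=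
  ∑ ν ∈ (Finset.range (min κ lam + 1)).filter
      (fun ν => ν % 2 = κ % 2 ∧ κ % 2 = lam % 2),
    (Nat.factorial ν : ℝ) * (κ.choose ν) * (lam.choose ν) *
      gaussMoment (κ - ν) * gaussMoment (lam - ν) * G ^ ν

/-
The right-hand side factors as `exp (U²/2) · exp (G U V) · exp (V²/2)`. The outer factors have
exponential generating functions `∑ m_j U^j / j!` (only even `j` contribute, and
`m_{2k} / (2k)! = 1 / (2^k k!)`), and `exp (G U V)`, as a series in `(U, V)`, lives on the diagonal.
Their Cauchy product over `ℕ × ℕ` has `(κ, λ)`-coefficient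
`∑_ν G^ν / ν! · m_{κ-ν} / (κ-ν)! · m_{λ-ν} / (λ-ν)!`, which is `L_{κ,λ} / (κ! λ!)`; the parity
condition in `L_{κ,λ}` only discards terms that vanish because odd moments are zero.
-/

open Finset
open scoped Nat

noncomputable instance : HasAntidiagonal (ℕ × ℕ) := HasAntidiagonal.antidiagonalOfLocallyFinite

lemma gaussMoment_nonneg (j : ℕ) : 0 ≤ gaussMoment j := by
  unfold gaussMoment
  split_ifs <;> positivity

lemma gaussMoment_of_not_even {j : ℕ} (hj : ¬ Even j) : gaussMoment j = 0 := if_neg hj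

noncomputable def gaussMomentTerm (U : ℝ) (j : ℕ) : ℝ := gaussMoment j * U ^ j / j !

lemma gaussMomentTerm_two_mul (U : ℝ) (m : ℕ) :
    gaussMomentTerm U (2 * m) = (U ^ 2 / 2) ^ m / m ! := by
  rw [gaussMomentTerm, gaussMoment, if_pos (even_two_mul m), Nat.mul_div_cancel_left m two_pos,
    pow_mul, div_pow]
  field_simp

lemma hasSum_pow_div_factorial_exp (x : ℝ) : HasSum (fun n => x ^ n / n !) (Real.exp x) := by
  rw [Real.exp_eq_exp_ℝ]
  exact NormedSpace.expSeries_div_hasSum_exp x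

lemma hasSum_gaussMomentTerm (U : ℝ) : HasSum (gaussMomentTerm U) (Real.exp (U ^ 2 / 2)) := by
  rw [← (mul_right_injective₀ (two_ne_zero (α := ℕ))).hasSum_iff]
  · simpa [Function.comp_def, gaussMomentTerm_two_mul] using
      hasSum_pow_div_factorial_exp (U ^ 2 / 2)
  · rintro j hj
    rw [gaussMomentTerm, gaussMoment_of_not_even, zero_mul, zero_div]
    rintro ⟨m, rfl⟩
    exact hj ⟨m, two_mul m⟩

lemma summable_norm_gaussMomentTerm (U : ℝ) : Summable fun j => ‖gaussMomentTerm U j‖ :=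
  (hasSum_gaussMomentTerm |U|).summable.congr fun j => by
    rw [gaussMomentTerm, gaussMomentTerm, norm_div, norm_mul, norm_pow,
      Real.norm_of_nonneg (gaussMoment_nonneg j), Real.norm_eq_abs, RCLike.norm_natCast]

lemma hasSum_ite_fst_eq_snd {α M : Type*} [DecidableEq α] [AddCommMonoid M] [TopologicalSpace M]
    {f : α → M} {a : M} (hf : HasSum f a) :
    HasSum (fun q : α × α => if q.1 = q.2 then f q.1 else 0) a := by
  have hdiag : Function.Injective fun n : α => (n, n) := fun _ _ h => congrArg Prod.fst h
  rw [← hdiag.hasSum_iff]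
  · simpa [Function.comp_def] using hf
  · rintro ⟨p, q⟩ hpq
    refine if_neg ?_
    rintro (rfl : p = q)
    exact hpq ⟨p, rfl⟩

lemma sum_antidiagonal_ite_fst_eq_snd_mul {R : Type*} [NonAssocSemiring R] (a : ℕ → R)
    (b : ℕ × ℕ → R) (κ lam : ℕ) :
    ∑ kl ∈ antidiagonal (κ, lam), (if kl.1.1 = kl.1.2 then a kl.1.1 else 0) * b kl.2 =
      ∑ ν ∈ range (min κ lam + 1), a ν * b (κ - ν, lam - ν) := by
  simp only [ite_mul, zero_mul]
  rw [← sum_filter]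
  refine sum_nbij' (fun kl => kl.1.1) (fun ν => ((ν, ν), (κ - ν, lam - ν))) ?_ ?_ ?_ ?_ ?_
  all_goals simp only [mem_filter, mem_range, HasAntidiagonal.mem_antidiagonal, Prod.forall,
    Prod.mk_add_mk, Prod.mk.injEq, and_true, true_and]
  · omega
  · omega
  · omega
  · simp
  · rintro p q r s ⟨⟨rfl, rfl⟩, rfl⟩
    simp

lemma Lmix_eq_sum_range (G : ℝ) (κ lam : ℕ) :
    Lmix G κ lam = ∑ ν ∈ range (min κ lam + 1),
      (ν ! : ℝ) * κ.choose ν * lam.choose ν * gaussMoment (κ - ν) * gaussMoment (lam - ν) *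
        G ^ ν := by
  refine sum_filter_of_ne fun ν hν hne => ?_
  have hκ : Even (κ - ν) := by_contra fun h => hne (by simp [gaussMoment_of_not_even h])
  have hlam : Even (lam - ν) := by_contra fun h => hne (by simp [gaussMoment_of_not_even h])
  rw [mem_range] at hν
  rw [Nat.even_iff] at hκ hlam
  omega

lemma Lmix_mul_pow_div_factorial (G U V : ℝ) (κ lam : ℕ) :
    Lmix G κ lam * U ^ κ * V ^ lam / κ ! / lam ! = ∑ ν ∈ range (min κ lam + 1),
      (G * U * V) ^ ν / ν ! * (gaussMomentTerm U (κ - ν) * gaussMomentTerm V (lam - ν)) := by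
  rw [Lmix_eq_sum_range, sum_mul, sum_mul, sum_div, sum_div]
  refine sum_congr rfl fun ν hν => ?_
  rw [mem_range, Nat.lt_succ_iff, le_min_iff] at hν
  obtain ⟨i, rfl⟩ := exists_add_of_le hν.1
  obtain ⟨j, rfl⟩ := exists_add_of_le hν.2
  rw [Nat.add_sub_cancel_left, Nat.add_sub_cancel_left, Nat.cast_choose ℝ (Nat.le_add_right ν i),
    Nat.cast_choose ℝ (Nat.le_add_right ν j), Nat.add_sub_cancel_left, Nat.add_sub_cancel_left,
    gaussMomentTerm, gaussMomentTerm]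
  field_simp
  ring

lemma Lmix_mul_pow_div_factorial_eq_sum_antidiagonal (G U V : ℝ) (n : ℕ × ℕ) :
    Lmix G n.1 n.2 * U ^ n.1 * V ^ n.2 / n.1 ! / n.2 ! = ∑ kl ∈ antidiagonal n,
      (if kl.1.1 = kl.1.2 then (G * U * V) ^ kl.1.1 / kl.1.1 ! else 0) *
        (gaussMomentTerm U kl.2.1 * gaussMomentTerm V kl.2.2) := by
  rw [Lmix_mul_pow_div_factorial]
  exact (sum_antidiagonal_ite_fst_eq_snd_mul (fun ν => (G * U * V) ^ ν / ν !)
    (fun r => gaussMomentTerm U r.1 * gaussMomentTerm V r.2) n.1 n.2).symm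

/-- The double exponential generating function of the `L_{κ,λ}` equals
`exp(U²/2 + G U V + V²/2)`. -/
theorem Lmix_exponential_generating_function (G : ℝ) (U V : ℝ) :
    ∑' p : ℕ × ℕ,
        Lmix G p.1 p.2 * U ^ p.1 * V ^ p.2 /
          (Nat.factorial p.1) / (Nat.factorial p.2)
      = Real.exp (U ^ 2 / 2 + G * U * V + V ^ 2 / 2) := by
  have hdiag := hasSum_ite_fst_eq_snd (hasSum_pow_div_factorial_exp (G * U * V))
  have hdiag_norm : Summable fun q : ℕ × ℕ =>
      ‖if q.1 = q.2 then (G * U * V) ^ q.1 / q.1 ! else 0‖ :=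
    (hasSum_ite_fst_eq_snd (hasSum_pow_div_factorial_exp |G * U * V|)).summable.congr
      fun q => by split_ifs <;> simp
  have hgauss_norm : Summable fun r : ℕ × ℕ => ‖gaussMomentTerm U r.1 * gaussMomentTerm V r.2‖ :=
    (summable_norm_gaussMomentTerm U).mul_norm (summable_norm_gaussMomentTerm V)
  have hgauss := (hasSum_gaussMomentTerm U).mul (hasSum_gaussMomentTerm V) hgauss_norm.of_norm
  have hprod := summable_mul_of_summable_norm hdiag_norm hgauss_norm
  have cauchy :=
    Summable.tsum_mul_tsum_eq_tsum_sum_antidiagonal hdiag.summable hgauss.summable hprod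
  rw [hdiag.tsum_eq, hgauss.tsum_eq] at cauchy
  rw [tsum_congr (Lmix_mul_pow_div_factorial_eq_sum_antidiagonal G U V), ← cauchy,
    ← Real.exp_add, ← Real.exp_add]
  congr 1
  ring
end
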